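/- arXiv:1501.07826 — 2 statements merged into one kernel-verified Lean document; each statement's English description precedes it below -/
import Mathlib

section
/- For every q ≥ 0 and each j ∈ {1,2}, the value L_{ξ,j}(q) equals L_x(q) for at least one point x belonging to the family consisting of the points x_n = (Q_n, P_n) with −1 ≤ n < s together with the points x_{n,t} = (Q_{n,t}, P_{n,t}) with 1 ≤ n < s and 0 < t < a_n. In other words, the combined graph of (L_{ξ,1}, L_{ξ,2}) is covered by the trajectories of these points. -/
open Pointwise

/-- Distance from a real number to the nearest integer. -/
noncomputable def nearestInt (ξ : ℝ) : ℝ := sInf (Set.range fun m : ℤ => |ξ - (m : ℝ)|)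

/-- The convex body `C_ξ(e^q) = {(x,y) : |x| ≤ e^q, |xξ - y| ≤ e^{-q}}`. -/
def body (ξ q : ℝ) : Set (ℝ × ℝ) :=
  {p : ℝ × ℝ | |p.1| ≤ Real.exp q ∧ |p.1 * ξ - p.2| ≤ Real.exp (-q)}

/-- The `j`-th successive minimum of `C_ξ(e^q)` with respect to the lattice `ℤ²`:
the smallest `λ ≥ 0` such that `λ • C_ξ(e^q)` contains at least `j` linearly
independent points of `ℤ²`. -/
noncomputable def lam (ξ q : ℝ) (j : ℕ) : ℝ :=
  sInf {l : ℝ | 0 ≤ l ∧ ∃ v : Fin j → ℤ × ℤ,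
    LinearIndependent ℝ (fun i => ((((v i).1 : ℝ)), (((v i).2 : ℝ)))) ∧
    ∀ i, ((((v i).1 : ℝ)), (((v i).2 : ℝ))) ∈ l • body ξ q}

/-- `L_{ξ,j}(q) = log λ_j(C_ξ(e^q))`. -/
noncomputable def LL (ξ : ℝ) (j : ℕ) (q : ℝ) : ℝ := Real.log (lam ξ q j)

/-- `L_x(q)`: the logarithm of the smallest `λ ≥ 0` with `x ∈ λ • C_ξ(e^q)`, namely
`log (max (|Q| e^{-q}) (|Qξ - P| e^q))`, which equals
`max (log |Q| - q) (log |Qξ - P| + q)` (the first term being omitted when `Q = 0`,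
the second when `Qξ - P = 0`). -/
noncomputable def Lx (ξ : ℝ) (x : ℤ × ℤ) (q : ℝ) : ℝ :=
  Real.log (max (|(x.1 : ℝ)| * Real.exp (-q)) (|(x.1 : ℝ) * ξ - (x.2 : ℝ)| * Real.exp q))

/-- Data of a real number `ξ ∈ [0,1/2]` together with its simple continued fraction
expansion `ξ = [0; a 1, a 2, …]`, with partial quotients `a n ≥ 1` for `1 ≤ n < s`,
where `s ∈ ℕ* ∪ {∞}` (encoded in `WithTop ℤ`), `a (s-1) ≥ 2` if `2 ≤ s < ∞`
(`s = 1` meaning `ξ = 0`), and with `Q`, `P` the denominators and numerators of its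
convergents, given by the standard recurrences with initial values
`P (-1) = Q 0 = 1`, `P 0 = Q (-1) = 0`.  The fact that `[0; a 1, a 2, …]` is indeed
the continued fraction expansion of `ξ` is recorded through the value conditions
`hfin` (if `s < ∞` then `ξ = P (s-1) / Q (s-1)`) and `hinf` (if `s = ∞` then
`P n / Q n → ξ`), which, given the constraints on the `a n`, characterize it. -/
structure CFData where
  ξ : ℝ
  s : WithTop ℤ
  a : ℤ → ℤ
  Q : ℤ → ℤ
  P : ℤ → ℤ
  hξ0 : 0 ≤ ξ
  hξhalf : ξ ≤ 1 / 2
  hs : 1 ≤ s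
  ha : ∀ n : ℤ, 1 ≤ n → (n : WithTop ℤ) < s → 1 ≤ a n
  halast : ∀ n : ℤ, 2 ≤ n → (n : WithTop ℤ) = s → 2 ≤ a (n - 1)
  hQ0 : Q 0 = 1
  hQneg : Q (-1) = 0
  hP0 : P 0 = 0
  hPneg : P (-1) = 1
  hQrec : ∀ n : ℤ, 1 ≤ n → (n : WithTop ℤ) < s → Q n = Q (n - 2) + a n * Q (n - 1)
  hPrec : ∀ n : ℤ, 1 ≤ n → (n : WithTop ℤ) < s → P n = P (n - 2) + a n * P (n - 1)
  hfin : ∀ k : ℤ, (k : WithTop ℤ) = s → ξ = (P (k - 1) : ℝ) / (Q (k - 1) : ℝ)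
  hinf : s = ⊤ → Filter.Tendsto (fun n : ℕ => (P (n : ℤ) : ℝ) / (Q (n : ℤ) : ℝ))
      Filter.atTop (nhds ξ)

namespace CFData

/-- `Δ n = |Q n • ξ - P n|`. -/
noncomputable def Δ (c : CFData) (n : ℤ) : ℝ := |(c.Q n : ℝ) * c.ξ - (c.P n : ℝ)|

/-- `Q (n,t) = Q (n-2) + t * Q (n-1)`. -/
def Qt (c : CFData) (n t : ℤ) : ℤ := c.Q (n - 2) + t * c.Q (n - 1)

/-- `P (n,t) = P (n-2) + t * P (n-1)`. -/
def Pt (c : CFData) (n t : ℤ) : ℤ := c.P (n - 2) + t * c.P (n - 1)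

/-- `Δ (n,t) = |Q (n,t) • ξ - P (n,t)|`. -/
noncomputable def Δt (c : CFData) (n t : ℤ) : ℝ := |(c.Qt n t : ℝ) * c.ξ - (c.Pt n t : ℝ)|

/-- `q n = (log (Q n) - log (Δ (n-1))) / 2`; in particular `q 0 = 0`. -/
noncomputable def qcrit (c : CFData) (n : ℤ) : ℝ :=
  (Real.log (c.Q n : ℝ) - Real.log (c.Δ (n - 1))) / 2

end CFData


/-!
Write `g(y)` for the gauge of `C_ξ(e^q)` at a lattice point `y`, so that `L_y(q) = log g(y)`.
Each dilate of `C_ξ(e^q)` contains finitely many lattice points, so `λ₁` is the minimum of `g`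
over nonzero points and, if `x` attains it, `λ₂` is the minimum of `g` over points independent
of `x`. It therefore suffices to dominate every competitor by a point of the family.

If `Q_n ≤ |y₁| < Q_{n+1}`, the best approximation property `Δ_n ≤ |y₁ξ - y₂|` gives
`g(x_n) ≤ g(y)`, so `λ₁` is attained at a convergent `x_M`. A point `y` independent of `x_M` is
dominated in the same way by `x_n` unless `n = M`; then `±y = u x_{M-1} + v x_M` with `u ≥ 1`,
and since the remainders `Q_n ξ - P_n` alternate in sign, `|y₁ξ - y₂| = |u Δ_{M-1} - v Δ_M|`.
This makes `y` dominated by `x_{M-1}` if `v Δ_M ≤ 0`, and otherwise by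
`x_{M+1,v} = x_{M-1} + v x_M`, where `v ≤ a_{M+1}` because `|y₁| < Q_{M+1}`.
-/

open Real Filter Topology

noncomputable def defect (ξ : ℝ) (y : ℤ × ℤ) : ℝ := y.1 * ξ - y.2

def wedge (y z : ℤ × ℤ) : ℤ := y.1 * z.2 - y.2 * z.1

section LatticeAlgebra

variable (ξ : ℝ)

@[simp] lemma defect_add (y z : ℤ × ℤ) : defect ξ (y + z) = defect ξ y + defect ξ z := by
  simp only [defect, Prod.fst_add, Prod.snd_add, Int.cast_add]; ring

@[simp] lemma defect_smul (u : ℤ) (y : ℤ × ℤ) : defect ξ (u • y) = u * defect ξ y := by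
  simp only [defect, Prod.smul_fst, Prod.smul_snd, smul_eq_mul, Int.cast_mul]; ring

@[simp] lemma defect_neg (y : ℤ × ℤ) : defect ξ (-y) = -defect ξ y := by
  simp only [defect, Prod.fst_neg, Prod.snd_neg, Int.cast_neg]; ring

lemma wedge_comm (y z : ℤ × ℤ) : wedge y z = -wedge z y := by
  unfold wedge; ring

lemma wedge_smul_add_smul_right (u v : ℤ) (y z : ℤ × ℤ) :
    wedge (u • y + v • z) z = u * wedge y z := by
  simp only [wedge, Prod.fst_add, Prod.snd_add, Prod.smul_fst, Prod.smul_snd, smul_eq_mul]; ring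

lemma wedge_self (y : ℤ × ℤ) : wedge y y = 0 := by
  unfold wedge; ring

lemma wedge_add_smul_right (v : ℤ) (y z w : ℤ × ℤ) :
    wedge y (z + v • w) = wedge y z + v * wedge y w := by
  simp only [wedge, Prod.fst_add, Prod.snd_add, Prod.smul_fst, Prod.smul_snd, smul_eq_mul]; ring

lemma wedge_eq_mul_defect_sub (y z : ℤ × ℤ) :
    (wedge y z : ℝ) = z.1 * defect ξ y - y.1 * defect ξ z := by
  push_cast [wedge, defect]; ring

lemma wedge_eq_zero_of_wedge_eq_zero {x y z : ℤ × ℤ} (hx : x ≠ 0) (hy : wedge y x = 0)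
    (hz : wedge z x = 0) : wedge y z = 0 := by
  have h₁ : x.1 * wedge y z = 0 := by unfold wedge at *; linear_combination z.1 * hy - y.1 * hz
  have h₂ : x.2 * wedge y z = 0 := by unfold wedge at *; linear_combination z.2 * hy - y.2 * hz
  by_contra h
  exact hx (Prod.ext (by simpa [h] using h₁) (by simpa [h] using h₂))

end LatticeAlgebra

lemma abs_negOnePow_cast (n : ℤ) : |(n.negOnePow : ℝ)| = 1 := by
  rw [← Int.cast_abs, Int.abs_negOnePow, Int.cast_one]

lemma ne_zero_and_mul_nonpos_of_abs_lt {u v a b : ℤ} (ha : 0 ≤ a) (h₀ : u * a + v * b ≠ 0)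
    (h : |u * a + v * b| < b) : u ≠ 0 ∧ u * v ≤ 0 := by
  have hb : 0 < b := (abs_nonneg _).trans_lt h
  refine ⟨?_, ?_⟩
  · rintro rfl
    have hv : 1 ≤ |v| := Int.one_le_abs (by rintro rfl; simp at h₀)
    rw [zero_mul, zero_add, abs_mul, abs_of_pos hb] at h
    nlinarith
  · by_contra! huv
    rcases lt_or_gt_of_ne (left_ne_zero_of_mul (ne_of_gt huv)) with hu | hu
    · have : v < 0 := by nlinarith
      rw [abs_of_neg (by nlinarith)] at h
      nlinarith
    · have : 0 < v := by nlinarith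
      rw [abs_of_pos (by nlinarith)] at h
      nlinarith

lemma abs_mul_le_abs_mul_sub_mul {u v a b : ℝ} (hb : 0 ≤ b) (huv : u * v ≤ 0) :
    |u| * a ≤ |u * a - v * b| := by
  rcases lt_trichotomy u 0 with hu | rfl | hu
  · have hv : 0 ≤ v := by nlinarith
    rw [abs_of_neg hu]
    exact le_trans (by nlinarith [mul_nonneg hv hb]) (neg_le_abs _)
  · simpa using abs_nonneg (v * b)
  · have hv : v ≤ 0 := by nlinarith
    rw [abs_of_pos hu]
    exact le_trans (by nlinarith [mul_nonpos_of_nonpos_of_nonneg hv hb]) (le_abs_self _)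

/-- The gauge of `body ξ q` at `y`, i.e. the least `λ > 0` with `y ∈ λ • body ξ q`. -/
noncomputable def bodyGauge (ξ q : ℝ) (y : ℤ × ℤ) : ℝ :=
  max (|(y.1 : ℝ)| * exp (-q)) (|defect ξ y| * exp q)

section Gauge

variable {ξ q : ℝ}

lemma bodyGauge_neg (y : ℤ × ℤ) : bodyGauge ξ q (-y) = bodyGauge ξ q y := by
  simp [bodyGauge]

lemma bodyGauge_pos {y : ℤ × ℤ} (hy : y ≠ 0) : 0 < bodyGauge ξ q y := by
  by_cases hy₁ : y.1 = 0
  · have : y.2 ≠ 0 := fun h => hy (Prod.ext hy₁ h)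
    refine lt_max_of_lt_right (mul_pos (abs_pos.mpr ?_) (exp_pos q))
    simpa [defect, hy₁]
  · exact lt_max_of_lt_left (mul_pos (by simpa using hy₁) (exp_pos _))

lemma exp_le_bodyGauge {y : ℤ × ℤ} (hy : y ≠ 0) (hy₁ : y.1 = 0) : exp q ≤ bodyGauge ξ q y := by
  have : (1 : ℝ) ≤ |defect ξ y| := by
    have := Int.one_le_abs fun h => hy (Prod.ext hy₁ h)
    simpa [defect, hy₁, ← Int.cast_abs] using (by exact_mod_cast this : (1 : ℝ) ≤ (|y.2| : ℤ))
  exact le_max_of_le_right (le_mul_of_one_le_left (exp_pos q).le this)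

lemma mem_smul_body_iff {l : ℝ} (hl : 0 < l) (y : ℤ × ℤ) :
    ((y.1 : ℝ), (y.2 : ℝ)) ∈ l • body ξ q ↔ bodyGauge ξ q y ≤ l := by
  rw [Set.mem_smul_set_iff_inv_smul_mem₀ hl.ne', bodyGauge, max_le_iff, ← le_div_iff₀ (exp_pos _),
    ← le_div_iff₀ (exp_pos _), div_eq_mul_inv, div_eq_mul_inv, ← exp_neg, ← exp_neg, neg_neg]
  simp only [body, Set.mem_ofPred_eq, Prod.smul_fst, Prod.smul_snd, smul_eq_mul, defect]
  rw [show l⁻¹ * y.1 * ξ - l⁻¹ * y.2 = l⁻¹ * (y.1 * ξ - y.2) by ring, abs_mul, abs_mul,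
    abs_of_pos (inv_pos.mpr hl), inv_mul_le_iff₀ hl, inv_mul_le_iff₀ hl]

lemma not_mem_zero_smul_body {y : ℤ × ℤ} (hy : y ≠ 0) :
    ((y.1 : ℝ), (y.2 : ℝ)) ∉ (0 : ℝ) • body ξ q := by
  rw [Set.zero_smul_set ⟨0, by simp [body, (exp_pos _).le]⟩]
  intro h
  exact hy (Prod.ext (by simpa using congrArg Prod.fst h) (by simpa using congrArg Prod.snd h))

instance : Northcott (bodyGauge ξ q) where
  finite_le b := by
    obtain ⟨N, hN⟩ := exists_nat_ge (b * exp q * (|ξ| + 1) + b * exp (-q))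
    refine ((Set.finite_Icc (-N : ℤ) N).prod (Set.finite_Icc (-N : ℤ) N)).subset fun y hy => ?_
    have hy : bodyGauge ξ q y ≤ b := hy
    have hb : 0 ≤ b := (le_max_of_le_left (by positivity)).trans hy
    have h₁ : |(y.1 : ℝ)| ≤ b * exp q := by
      rw [← div_le_iff₀ (exp_pos _), div_eq_mul_inv, ← exp_neg]
      exact (le_max_left _ _).trans hy
    have h₂ : |defect ξ y| ≤ b * exp (-q) := by
      rw [← div_le_iff₀ (exp_pos _), div_eq_mul_inv, ← exp_neg, neg_neg]
      exact (le_max_right _ _).trans hy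
    have h₃ : |(y.2 : ℝ)| ≤ |(y.1 : ℝ)| * |ξ| + |defect ξ y| := by
      rw [← abs_mul]
      calc |(y.2 : ℝ)| = |y.1 * ξ - defect ξ y| := by simp [defect]
        _ ≤ _ := abs_sub _ _
    have h₄ : 0 ≤ b * exp q * |ξ| := by positivity
    have h₆ : 0 ≤ b * exp q := by positivity
    have h₅ : 0 ≤ b * exp (-q) := by positivity
    simp only [Set.mem_prod, Set.mem_Icc, ← abs_le]
    constructor
    · exact_mod_cast (by nlinarith : |(y.1 : ℝ)| ≤ N)
    · exact_mod_cast (by nlinarith [mul_le_mul_of_nonneg_right h₁ (abs_nonneg ξ)] :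
        |(y.2 : ℝ)| ≤ N)

lemma linearIndependent_iff_wedge_ne_zero (v : Fin 2 → ℤ × ℤ) :
    LinearIndependent ℝ (fun i => (((v i).1 : ℝ), ((v i).2 : ℝ))) ↔ wedge (v 0) (v 1) ≠ 0 := by
  have hv : (fun i => (((v i).1 : ℝ), ((v i).2 : ℝ))) =
      ![(((v 0).1 : ℝ), ((v 0).2 : ℝ)), (((v 1).1 : ℝ), ((v 1).2 : ℝ))] := by
    ext i <;> fin_cases i <;> rfl
  have hw : (wedge (v 0) (v 1) : ℝ) = (v 0).1 * (v 1).2 - (v 0).2 * (v 1).1 := by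
    push_cast [wedge]; ring
  rw [hv, LinearIndependent.pair_iff, Ne, ← Int.cast_eq_zero (α := ℝ), hw]
  simp only [Prod.smul_mk, smul_eq_mul, Prod.mk_add_mk, Prod.mk_eq_zero]
  constructor
  · intro H h0
    obtain ⟨h₁, h₂⟩ := H (v 1).2 (-(v 0).2) ⟨by linear_combination h0, by ring⟩
    obtain ⟨h₃, h₄⟩ := H (v 1).1 (-(v 0).1) ⟨by ring, by linear_combination -h0⟩
    exact one_ne_zero (H 1 0 ⟨by simp [neg_eq_zero.mp h₄], by simp [neg_eq_zero.mp h₂]⟩).1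
  · intro h s t ⟨h₁, h₂⟩
    refine ⟨(mul_eq_zero.mp ?_).resolve_right h, (mul_eq_zero.mp ?_).resolve_right h⟩
    · linear_combination (v 1).2 * h₁ - (v 1).1 * h₂
    · linear_combination (v 0).1 * h₂ - (v 0).2 * h₁

lemma ne_zero_of_linearIndependent {j : ℕ} {v : Fin j → ℤ × ℤ}
    (hv : LinearIndependent ℝ fun i => (((v i).1 : ℝ), ((v i).2 : ℝ))) (i : Fin j) : v i ≠ 0 :=
  fun h => hv.ne_zero i (by simp [h])

lemma lam_eq_of_forall_exists_le {m : ℝ} {j : ℕ} (v₀ : Fin j → ℤ × ℤ)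
    (hv₀ : LinearIndependent ℝ fun i => (((v₀ i).1 : ℝ), ((v₀ i).2 : ℝ)))
    (hv₀m : ∀ i, bodyGauge ξ q (v₀ i) ≤ m)
    (hm : ∀ v : Fin j → ℤ × ℤ, (LinearIndependent ℝ fun i => (((v i).1 : ℝ), ((v i).2 : ℝ))) →
      ∃ i, m ≤ bodyGauge ξ q (v i)) :
    lam ξ q j = m := by
  obtain ⟨i, -⟩ := hm v₀ hv₀
  have hm₀ : 0 < m := (bodyGauge_pos (ne_zero_of_linearIndependent hv₀ i)).trans_le (hv₀m i)
  refine IsLeast.csInf_eq ⟨⟨hm₀.le, v₀, hv₀, fun i => (mem_smul_body_iff hm₀ _).mpr (hv₀m i)⟩, ?_⟩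
  rintro l ⟨hl, v, hv, hmem⟩
  obtain ⟨i, hi⟩ := hm v hv
  obtain rfl | hl := hl.eq_or_lt
  · exact absurd (hmem i) (not_mem_zero_smul_body (ne_zero_of_linearIndependent hv i))
  · exact hi.trans ((mem_smul_body_iff hl _).mp (hmem i))

lemma lam_one_eq {x : ℤ × ℤ} (hx : x ≠ 0)
    (hmin : ∀ y, y ≠ 0 → bodyGauge ξ q x ≤ bodyGauge ξ q y) :
    lam ξ q 1 = bodyGauge ξ q x :=
  lam_eq_of_forall_exists_le ![x]
    (linearIndependent_unique_iff.mpr fun h => hx (by simpa [Prod.ext_iff] using h))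
    (fun _ => by simp) fun _ hv => ⟨0, hmin _ (ne_zero_of_linearIndependent hv 0)⟩

lemma lam_two_eq {x f : ℤ × ℤ} (hx : x ≠ 0)
    (hxmin : ∀ y, y ≠ 0 → bodyGauge ξ q x ≤ bodyGauge ξ q y) (hf : wedge f x ≠ 0)
    (hfmin : ∀ y, wedge y x ≠ 0 → bodyGauge ξ q f ≤ bodyGauge ξ q y) :
    lam ξ q 2 = bodyGauge ξ q f := by
  refine lam_eq_of_forall_exists_le ![x, f]
    ((linearIndependent_iff_wedge_ne_zero _).mpr (by simpa [wedge_comm x f] using hf)) ?_ ?_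
  · intro i
    fin_cases i
    · exact hxmin f (by rintro rfl; simp [wedge] at hf)
    · exact le_rfl
  · intro v hv
    by_contra! h
    have h₀ : wedge (v 0) x = 0 := by by_contra h₀; exact (h 0).not_ge (hfmin _ h₀)
    have h₁ : wedge (v 1) x = 0 := by by_contra h₁; exact (h 1).not_ge (hfmin _ h₁)
    exact (linearIndependent_iff_wedge_ne_zero v).mp hv (wedge_eq_zero_of_wedge_eq_zero hx h₀ h₁)

end Gauge

namespace CFData

variable (c : CFData)

lemma coe_lt_s_of_le {n m : ℤ} (h : n ≤ m) (hm : (m : WithTop ℤ) < c.s) :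
    (n : WithTop ℤ) < c.s :=
  lt_of_le_of_lt (WithTop.coe_le_coe.mpr h) hm

lemma zero_lt_s : ((0 : ℤ) : WithTop ℤ) < c.s :=
  lt_of_lt_of_le (WithTop.coe_lt_coe.mpr zero_lt_one) c.hs

lemma coe_add_one_eq_s {n : ℤ} (h : (n : WithTop ℤ) < c.s)
    (h' : ¬((n + 1 : ℤ) : WithTop ℤ) < c.s) : ((n + 1 : ℤ) : WithTop ℤ) = c.s := by
  have hs : c.s ≠ ⊤ := fun ht => h' (by rw [ht]; exact WithTop.coe_lt_top _)
  obtain ⟨k, hk⟩ := WithTop.ne_top_iff_exists.mp hs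
  rw [← hk] at h h' ⊢
  have : n < k := WithTop.coe_lt_coe.mp h
  have : ¬n + 1 < k := fun hlt => h' (WithTop.coe_lt_coe.mpr hlt)
  congr 1; omega

def conv (n : ℤ) : ℤ × ℤ := (c.Q n, c.P n)

lemma conv_rec {n : ℤ} (hn : 1 ≤ n) (hns : (n : WithTop ℤ) < c.s) :
    c.conv n = c.conv (n - 2) + c.a n • c.conv (n - 1) := by
  simp [conv, c.hQrec n hn hns, c.hPrec n hn hns]

lemma Qt_Pt_eq (n t : ℤ) : (c.Qt n t, c.Pt n t) = c.conv (n - 2) + t • c.conv (n - 1) := by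
  simp [Qt, Pt, conv]

lemma Q_bounds {n : ℤ} (hn : 0 ≤ n) (hns : (n : WithTop ℤ) < c.s) :
    1 ≤ c.Q n ∧ 0 ≤ c.Q (n - 1) ∧ c.Q (n - 1) ≤ c.Q n ∧ n ≤ c.Q n + c.Q (n - 1) := by
  induction n, hn using Int.leInduction with
  | base => simp [c.hQ0, c.hQneg]
  | succ n hn ih =>
    obtain ⟨h₁, h₂, h₃, h₄⟩ := ih (c.coe_lt_s_of_le (by omega) hns)
    have hrec := c.hQrec (n + 1) (by omega) hns
    have ha := c.ha (n + 1) (by omega) hns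
    rw [show n + 1 - 2 = n - 1 by ring, show n + 1 - 1 = n by ring] at hrec
    simp only [add_sub_cancel_right]
    refine ⟨by nlinarith, by omega, by nlinarith, by nlinarith⟩

lemma one_le_Q {n : ℤ} (hn : 0 ≤ n) (hns : (n : WithTop ℤ) < c.s) : 1 ≤ c.Q n :=
  (c.Q_bounds hn hns).1

lemma Q_nonneg {n : ℤ} (hn : -1 ≤ n) (hns : (n : WithTop ℤ) < c.s) : 0 ≤ c.Q n := by
  obtain rfl | hn := hn.eq_or_lt
  · simp [c.hQneg]
  · linarith [c.one_le_Q (by omega : 0 ≤ n) hns]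

lemma Q_sub_one_le {n : ℤ} (hn : 0 ≤ n) (hns : (n : WithTop ℤ) < c.s) :
    c.Q (n - 1) ≤ c.Q n :=
  (c.Q_bounds hn hns).2.2.1

lemma le_two_mul_Q {n : ℤ} (hn : 0 ≤ n) (hns : (n : WithTop ℤ) < c.s) : n ≤ 2 * c.Q n := by
  have := c.Q_bounds hn hns; omega

lemma conv_ne_zero {n : ℤ} (hn : -1 ≤ n) (hns : (n : WithTop ℤ) < c.s) : c.conv n ≠ 0 := by
  obtain rfl | hn := hn.eq_or_lt
  · simp [conv, c.hPneg]
  · have := c.one_le_Q (by omega : 0 ≤ n) hns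
    simp only [conv, ne_eq, Prod.mk_eq_zero, not_and]
    omega

lemma wedge_conv_add_one {n : ℤ} (hn : -1 ≤ n) (hns : ((n + 1 : ℤ) : WithTop ℤ) < c.s) :
    wedge (c.conv n) (c.conv (n + 1)) = n.negOnePow := by
  induction n, hn using Int.leInduction with
  | base => simp [wedge, conv, c.hQ0, c.hP0, c.hQneg, c.hPneg]
  | succ n hn ih =>
    rw [c.conv_rec (by omega) hns, show n + 1 + 1 - 2 = n by ring,
      show n + 1 + 1 - 1 = n + 1 by ring, wedge_add_smul_right, wedge_self, mul_zero, add_zero,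
      wedge_comm,
      ih (c.coe_lt_s_of_le (by omega) hns), Int.negOnePow_succ, Units.val_neg]

lemma exists_eq_smul_add_smul {n : ℤ} (hn : 0 ≤ n) (hns : (n : WithTop ℤ) < c.s)
    (y : ℤ × ℤ) : ∃ u v : ℤ, y = u • c.conv (n - 1) + v • c.conv n := by
  have hd := c.wedge_conv_add_one (by omega : -1 ≤ n - 1) (by simpa using hns)
  simp only [sub_add_cancel, wedge, conv] at hd
  set e : ℤ := ((n - 1).negOnePow : ℤ)
  have he : e * e = 1 := Int.isUnit_mul_self (Units.isUnit _)
  refine ⟨e * (y.1 * c.P n - y.2 * c.Q n), e * (y.2 * c.Q (n - 1) - y.1 * c.P (n - 1)), ?_⟩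
  ext <;> simp only [conv, Prod.fst_add, Prod.snd_add, Prod.smul_fst, Prod.smul_snd, smul_eq_mul]
  · linear_combination (-e * y.1) * hd - y.1 * he
  · linear_combination (-e * y.2) * hd - y.2 * he

lemma one_le_negOnePow_mul_wedge_conv {n m : ℤ} (hn : -1 ≤ n) (hnm : n < m)
    (hms : (m : WithTop ℤ) < c.s) : 1 ≤ n.negOnePow * wedge (c.conv n) (c.conv m) := by
  suffices ∀ m, n + 1 ≤ m → (m : WithTop ℤ) < c.s →
      1 ≤ n.negOnePow * wedge (c.conv n) (c.conv m) ∧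
        0 ≤ n.negOnePow * wedge (c.conv n) (c.conv (m - 1)) from (this m hnm hms).1
  intro m hm
  induction m, hm using Int.leInduction with
  | base =>
    intro hs
    rw [c.wedge_conv_add_one hn hs, add_sub_cancel_right, wedge_self,
      Int.isUnit_mul_self (Units.isUnit _)]
    simp
  | succ m hm ih =>
    intro hs
    obtain ⟨h₁, h₂⟩ := ih (c.coe_lt_s_of_le (by omega) hs)
    have ha := c.ha (m + 1) (by omega) hs
    rw [c.conv_rec (by omega) hs, show m + 1 - 2 = m - 1 by ring, add_sub_cancel_right,
      wedge_add_smul_right]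
    constructor <;> nlinarith

lemma wedge_conv_ne_zero {n m : ℤ} (hn : -1 ≤ n) (hm : -1 ≤ m) (hnm : n ≠ m)
    (hns : (n : WithTop ℤ) < c.s) (hms : (m : WithTop ℤ) < c.s) :
    wedge (c.conv n) (c.conv m) ≠ 0 := by
  rcases hnm.lt_or_gt with h | h
  · have := c.one_le_negOnePow_mul_wedge_conv hn h hms
    intro h0
    rw [h0, mul_zero] at this
    omega
  · have := c.one_le_negOnePow_mul_wedge_conv hm h hns
    rw [wedge_comm, neg_ne_zero]
    intro h0
    rw [h0, mul_zero] at this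
    omega

noncomputable def θ (n : ℤ) : ℝ := defect c.ξ (c.conv n)

lemma Δ_eq_abs_θ (n : ℤ) : c.Δ n = |c.θ n| := rfl

lemma θ_rec {n : ℤ} (hn : 1 ≤ n) (hns : (n : WithTop ℤ) < c.s) :
    c.θ n = c.θ (n - 2) + c.a n * c.θ (n - 1) := by
  rw [θ, c.conv_rec hn hns, defect_add, defect_smul]; rfl

lemma θ_sub_one_of_eq_s {k : ℤ} (hk : (k : WithTop ℤ) = c.s) : c.θ (k - 1) = 0 := by
  have hk1 : 1 ≤ k := by exact_mod_cast hk ▸ c.hs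
  have hQ := c.one_le_Q (by omega : 0 ≤ k - 1) (by rw [← hk]; exact_mod_cast (by omega : k - 1 < k))
  have hQ' : (c.Q (k - 1) : ℝ) ≠ 0 := by exact_mod_cast (by omega : c.Q (k - 1) ≠ 0)
  rw [θ, defect, conv, c.hfin k hk]
  field_simp
  ring

noncomputable def ρ (n : ℤ) : ℝ := n.negOnePow * c.θ n

lemma ρ_sub_one {n : ℤ} (hn : 0 ≤ n) (hns : ((n + 1 : ℤ) : WithTop ℤ) < c.s) :
    c.ρ (n - 1) = c.ρ (n + 1) + c.a (n + 1) * c.ρ n := by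
  have h := c.θ_rec (by omega) hns
  rw [show n + 1 - 2 = n - 1 by ring, add_sub_cancel_right] at h
  simp only [ρ, h, Int.negOnePow_succ, Int.negOnePow_sub, Int.negOnePow_one, Units.val_neg,
    Units.val_mul, Int.cast_neg, Int.cast_mul, Units.val_one, Int.cast_one]
  ring

lemma Q_mul_ρ_add {n : ℤ} (hn : -1 ≤ n) (hns : ((n + 1 : ℤ) : WithTop ℤ) < c.s) :
    c.Q (n + 1) * c.ρ n + c.Q n * c.ρ (n + 1) = 1 := by
  have h := congrArg (fun z : ℤ => (z : ℝ)) (c.wedge_conv_add_one hn hns)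
  simp only [wedge_eq_mul_defect_sub c.ξ] at h
  have hσ : (n.negOnePow : ℝ) * n.negOnePow = 1 := by
    exact_mod_cast Int.isUnit_mul_self (Units.isUnit n.negOnePow)
  simp only [ρ, θ, Int.negOnePow_succ, Units.val_neg, Int.cast_neg]
  simp only [conv] at h ⊢
  linear_combination (n.negOnePow : ℝ) * h + hσ

lemma ρ_neg_one : c.ρ (-1) = 1 := by
  simp [ρ, θ, defect, conv, c.hQneg, c.hPneg]

lemma ρ_nonneg_of_coe_eq_s {k : ℤ} (hk : (k : WithTop ℤ) = c.s) {n : ℤ} (hn : -1 ≤ n)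
    (hnk : n < k) : 0 ≤ c.ρ n := by
  have hlt : ∀ m, m < k → (m : WithTop ℤ) < c.s := fun m hm => hk ▸ WithTop.coe_lt_coe.mpr hm
  have hk1 : 1 ≤ k := by exact_mod_cast hk ▸ c.hs
  -- Backwards from the last index, where `ρ (k - 1) = 0` and `Q (k - 1) ρ (k - 2) = 1`.
  suffices ∀ m ≤ k - 2, -1 ≤ m → 0 ≤ c.ρ m ∧ 0 ≤ c.ρ (m + 1) by
    obtain h | rfl := (show n ≤ k - 2 ∨ n = k - 1 by omega)
    · exact (this n h hn).1
    · exact (this (k - 2) le_rfl (by omega)).2.trans_eq (by ring_nf)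
  have hlast : c.ρ (k - 1) = 0 := by simp [ρ, c.θ_sub_one_of_eq_s hk]
  intro m hm
  induction m, hm using Int.leInductionDown with
  | base =>
    intro h
    have hI := c.Q_mul_ρ_add h (hlt _ (by omega))
    rw [show k - 2 + 1 = k - 1 by ring, hlast, mul_zero, add_zero] at hI
    have hQ : (1 : ℝ) ≤ c.Q (k - 1) := by exact_mod_cast c.one_le_Q (by omega) (hlt _ (by omega))
    refine ⟨by nlinarith, by rw [show k - 2 + 1 = k - 1 by ring, hlast]⟩
  | pred m hm ih =>
    intro h
    obtain ⟨h₁, h₂⟩ := ih (by omega)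
    have ha : (1 : ℝ) ≤ c.a (m + 1) := by exact_mod_cast c.ha (m + 1) (by omega) (hlt _ (by omega))
    rw [c.ρ_sub_one (by omega) (hlt _ (by omega)), sub_add_cancel]
    exact ⟨by nlinarith, h₁⟩

lemma ρ_div_Q_add_two_le {k : ℤ} (hk : 0 ≤ k) (hks : ((k + 2 : ℤ) : WithTop ℤ) < c.s) :
    c.ρ (k + 2) / c.Q (k + 2) ≤ c.ρ k / c.Q k := by
  -- `ρ k / Q k + ρ (k + 1) / Q (k + 1) = 1 / (Q k Q (k + 1))`, which decreases in `k`
  have hs₁ := c.coe_lt_s_of_le (by omega : k + 1 ≤ k + 2) hks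
  have hs₀ := c.coe_lt_s_of_le (by omega : k ≤ k + 2) hks
  have h₁ := c.Q_mul_ρ_add (by omega : -1 ≤ k) hs₁
  have h₂ := c.Q_mul_ρ_add (by omega : -1 ≤ k + 1) (by rwa [show k + 1 + 1 = k + 2 by ring])
  rw [show k + 1 + 1 = k + 2 by ring] at h₂
  have hQ₁ := c.Q_sub_one_le (by omega : 0 ≤ k + 1) hs₁
  have hQ₂ := c.Q_sub_one_le (by omega : 0 ≤ k + 2) hks
  rw [add_sub_cancel_right] at hQ₁
  rw [show k + 2 - 1 = k + 1 by ring] at hQ₂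
  have hQ : (c.Q k : ℝ) ≤ c.Q (k + 2) := by exact_mod_cast hQ₁.trans hQ₂
  have q₀ : (1 : ℝ) ≤ c.Q k := by exact_mod_cast c.one_le_Q hk hs₀
  have q₁ : (1 : ℝ) ≤ c.Q (k + 1) := by exact_mod_cast c.one_le_Q (by omega) hs₁
  rw [div_le_div_iff₀ (by linarith) (by linarith)]
  nlinarith

lemma ρ_nonneg_of_s_eq_top (hs : c.s = ⊤) {n : ℤ} (hn : -1 ≤ n) : 0 ≤ c.ρ n := by
  have hlt : ∀ m : ℤ, (m : WithTop ℤ) < c.s := fun m => hs ▸ WithTop.coe_lt_top m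
  obtain rfl | hn := hn.eq_or_lt
  · rw [ρ_neg_one]; exact zero_le_one
  have hQ : ∀ k : ℤ, 0 ≤ k → (0 : ℝ) < c.Q k := fun k hk => by
    exact_mod_cast c.one_le_Q hk (hlt k)
  -- `f k = ±(ξ - P k / Q k)` tends to `0` and decreases along each parity class.
  set f : ℤ → ℝ := fun k => c.ρ k / c.Q k with hf
  have htend : Tendsto (fun k : ℕ => f k) atTop (𝓝 0) := by
    have h := ((c.hinf hs).const_sub c.ξ).abs
    rw [sub_self, abs_zero] at h
    refine squeeze_zero_norm (fun k => le_of_eq ?_) h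
    have hfk : f k = (k : ℤ).negOnePow * (c.ξ - c.P k / c.Q k) := by
      have := (hQ k (by omega)).ne'
      simp only [hf, ρ, θ, defect, conv]
      field_simp
    rw [hfk, norm_mul, Real.norm_eq_abs, Real.norm_eq_abs, abs_negOnePow_cast, one_mul]
  lift n to ℕ using (by omega)
  have hanti : Antitone fun m : ℕ => f (n + 2 * m : ℕ) :=
    antitone_nat_of_succ_le fun m => by
      simpa [mul_add, ← add_assoc] using c.ρ_div_Q_add_two_le (k := (n + 2 * m : ℕ)) (by omega)
        (hlt _)
  have hfn := hanti.le_of_tendsto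
    (htend.comp (tendsto_atTop_mono (fun m : ℕ => show m ≤ n + 2 * m by omega) tendsto_id)) 0
  have : c.ρ n = c.Q n * f n := by simp only [hf]; field_simp [(hQ n (by omega)).ne']
  rw [this]
  exact mul_nonneg (hQ n (by omega)).le (by simpa using hfn)

lemma ρ_nonneg {n : ℤ} (hn : -1 ≤ n) (hns : (n : WithTop ℤ) < c.s) : 0 ≤ c.ρ n := by
  by_cases hs : c.s = ⊤
  · exact c.ρ_nonneg_of_s_eq_top hs hn
  · obtain ⟨k, hk⟩ := WithTop.ne_top_iff_exists.mp hs
    exact c.ρ_nonneg_of_coe_eq_s hk hn (by rw [← hk] at hns; exact_mod_cast hns)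

lemma Δ_eq_ρ {n : ℤ} (hn : -1 ≤ n) (hns : (n : WithTop ℤ) < c.s) : c.Δ n = c.ρ n := by
  rw [← abs_of_nonneg (c.ρ_nonneg hn hns), ρ, abs_mul, abs_negOnePow_cast, one_mul, Δ_eq_abs_θ]

lemma abs_defect_smul_add_smul {n : ℤ} (hn : 0 ≤ n) (hns : (n : WithTop ℤ) < c.s) (u v : ℤ) :
    |defect c.ξ (u • c.conv (n - 1) + v • c.conv n)| = |u * c.Δ (n - 1) - v * c.Δ n| := by
  rw [c.Δ_eq_ρ (by omega) (c.coe_lt_s_of_le (by omega) hns), c.Δ_eq_ρ (by omega) hns, ρ, ρ,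
    show n = n - 1 + 1 by ring, Int.negOnePow_succ, add_sub_cancel_right]
  rw [← one_mul |defect _ _|, ← abs_negOnePow_cast (n - 1), ← abs_mul, defect_add, defect_smul,
    defect_smul]
  simp only [θ, Units.val_neg, Int.cast_neg]
  ring_nf

lemma a_mul_Δ_le {n : ℤ} (hn : 0 ≤ n) (hns : ((n + 1 : ℤ) : WithTop ℤ) < c.s) :
    c.a (n + 1) * c.Δ n ≤ c.Δ (n - 1) := by
  have h := c.ρ_sub_one hn hns
  rw [c.Δ_eq_ρ (by omega) (c.coe_lt_s_of_le (by omega) hns), c.Δ_eq_ρ (by omega)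
    (c.coe_lt_s_of_le (by omega) hns), h]
  linarith [c.ρ_nonneg (by omega) hns]

lemma Δ_le_abs_defect {n : ℤ} (hn : 0 ≤ n) (hns : (n : WithTop ℤ) < c.s) {y : ℤ × ℤ}
    (hy : y.1 ≠ 0) (hlt : ((n + 1 : ℤ) : WithTop ℤ) < c.s → |y.1| < c.Q (n + 1)) :
    c.Δ n ≤ |defect c.ξ y| := by
  by_cases hs : ((n + 1 : ℤ) : WithTop ℤ) < c.s
  swap
  · have := c.θ_sub_one_of_eq_s (c.coe_add_one_eq_s hns hs)
    rw [add_sub_cancel_right] at this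
    rw [Δ_eq_abs_θ, this, abs_zero]
    exact abs_nonneg _
  have hlt := hlt hs
  obtain ⟨u, v, rfl⟩ := c.exists_eq_smul_add_smul (by omega) hs y
  rw [c.abs_defect_smul_add_smul (by omega) hs, add_sub_cancel_right]
  simp only [conv, Prod.fst_add, Prod.smul_fst, smul_eq_mul, add_sub_cancel_right] at hy hlt
  obtain ⟨hu, huv⟩ := ne_zero_and_mul_nonpos_of_abs_lt
    (c.Q_nonneg (by omega) (c.coe_lt_s_of_le (by omega) hs)) hy hlt
  have hu' : (1 : ℝ) ≤ |(u : ℝ)| := by rw [← Int.cast_abs]; exact_mod_cast Int.one_le_abs hu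
  calc c.Δ n ≤ |(u : ℝ)| * c.Δ n := le_mul_of_one_le_left (abs_nonneg _) hu'
    _ ≤ _ := abs_mul_le_abs_mul_sub_mul (abs_nonneg _) (by exact_mod_cast huv)

lemma exists_Q_le_lt {m : ℤ} (hm : 1 ≤ m) : ∃ n : ℤ, 0 ≤ n ∧ (n : WithTop ℤ) < c.s ∧
    c.Q n ≤ m ∧ (((n + 1 : ℤ) : WithTop ℤ) < c.s → m < c.Q (n + 1)) := by
  obtain ⟨n, ⟨hn, hns, hQ⟩, hmax⟩ :=
    Int.exists_greatest_of_bdd (P := fun n => 0 ≤ n ∧ (n : WithTop ℤ) < c.s ∧ c.Q n ≤ m)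
      ⟨2 * m, fun n ⟨hn, hns, hQ⟩ => by linarith [c.le_two_mul_Q hn hns]⟩
      ⟨0, le_rfl, c.zero_lt_s, by rw [c.hQ0]; exact hm⟩
  refine ⟨n, hn, hns, hQ, fun hs => ?_⟩
  by_contra! h
  linarith [hmax (n + 1) ⟨by omega, hs, h⟩]

def IsSemiconvergent (y : ℤ × ℤ) : Prop :=
  (∃ n : ℤ, -1 ≤ n ∧ (n : WithTop ℤ) < c.s ∧ y = (c.Q n, c.P n)) ∨
    (∃ n t : ℤ, 1 ≤ n ∧ (n : WithTop ℤ) < c.s ∧ 0 < t ∧ t < c.a n ∧ y = (c.Qt n t, c.Pt n t))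

lemma isSemiconvergent_conv {n : ℤ} (hn : -1 ≤ n) (hns : (n : WithTop ℤ) < c.s) :
    c.IsSemiconvergent (c.conv n) :=
  Or.inl ⟨n, hn, hns, rfl⟩

lemma isSemiconvergent_conv_sub_one_add_smul {n t : ℤ} (hn : 0 ≤ n)
    (hns : (n : WithTop ℤ) < c.s)
    (ht : t = 0 ∨ 1 ≤ t ∧ t ≤ c.a (n + 1) ∧ ((n + 1 : ℤ) : WithTop ℤ) < c.s) :
    c.IsSemiconvergent (c.conv (n - 1) + t • c.conv n) := by
  rcases ht with rfl | ⟨ht, hta, hs⟩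
  · simpa using c.isSemiconvergent_conv (by omega) (c.coe_lt_s_of_le (by omega) hns)
  have h := c.Qt_Pt_eq (n + 1) t
  rw [show n + 1 - 2 = n - 1 by ring, add_sub_cancel_right] at h
  obtain rfl | hta := hta.eq_or_lt
  · have := c.conv_rec (by omega) hs
    rw [show n + 1 - 2 = n - 1 by ring, add_sub_cancel_right] at this
    exact this ▸ c.isSemiconvergent_conv (by omega) hs
  · exact Or.inr ⟨n + 1, t, by omega, hs, ht, hta, h.symm⟩

lemma bodyGauge_conv_le (q : ℝ) {n : ℤ} (hn : 0 ≤ n) (hns : (n : WithTop ℤ) < c.s)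
    {y : ℤ × ℤ} (hy : y.1 ≠ 0) (hQ : c.Q n ≤ |y.1|)
    (hlt : ((n + 1 : ℤ) : WithTop ℤ) < c.s → |y.1| < c.Q (n + 1)) :
    bodyGauge c.ξ q (c.conv n) ≤ bodyGauge c.ξ q y := by
  refine max_le_max (mul_le_mul_of_nonneg_right ?_ (exp_pos _).le)
    (mul_le_mul_of_nonneg_right (c.Δ_le_abs_defect hn hns hy hlt) (exp_pos _).le)
  rw [← Int.cast_abs, ← Int.cast_abs]
  exact_mod_cast (abs_of_nonneg (c.Q_nonneg (by omega) hns)).trans_le hQ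

lemma bodyGauge_conv_zero_le {q : ℝ} (hq : 0 ≤ q) : bodyGauge c.ξ q (c.conv 0) ≤ exp q := by
  have hΔ : |defect c.ξ (c.conv 0)| = c.ξ := by
    simp [defect, conv, c.hQ0, c.hP0, abs_of_nonneg c.hξ0]
  rw [bodyGauge, hΔ]
  refine max_le ?_ ?_
  · simpa [conv, c.hQ0] using exp_le_exp.mpr (by linarith : -q ≤ q)
  · nlinarith [exp_pos q, c.hξhalf]

lemma bodyGauge_conv_neg_one (q : ℝ) : bodyGauge c.ξ q (c.conv (-1)) = exp q := by
  simp [bodyGauge, defect, conv, c.hQneg, c.hPneg, (exp_pos q).le]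

lemma exists_conv_bodyGauge_le {q : ℝ} (hq : 0 ≤ q) {y : ℤ × ℤ} (hy : y ≠ 0) :
    ∃ n : ℤ, 0 ≤ n ∧ (n : WithTop ℤ) < c.s ∧ bodyGauge c.ξ q (c.conv n) ≤ bodyGauge c.ξ q y := by
  by_cases hy₁ : y.1 = 0
  · exact ⟨0, le_rfl, c.zero_lt_s, (c.bodyGauge_conv_zero_le hq).trans (exp_le_bodyGauge hy hy₁)⟩
  · obtain ⟨n, hn, hns, hQ, hlt⟩ := c.exists_Q_le_lt (Int.one_le_abs hy₁)
    exact ⟨n, hn, hns, c.bodyGauge_conv_le q hn hns hy₁ hQ hlt⟩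

lemma exists_conv_isMin {q : ℝ} (hq : 0 ≤ q) : ∃ M : ℤ, 0 ≤ M ∧ (M : WithTop ℤ) < c.s ∧
    ∀ y, y ≠ 0 → bodyGauge c.ξ q (c.conv M) ≤ bodyGauge c.ξ q y := by
  obtain ⟨y₀, hy₀, hmin⟩ :=
    Northcott.exists_min_image (bodyGauge c.ξ q) {y | y ≠ 0} ⟨(1, 0), by simp⟩
  obtain ⟨M, hM, hMs, hle⟩ := c.exists_conv_bodyGauge_le hq hy₀
  exact ⟨M, hM, hMs, fun y hy => hle.trans (hmin y hy)⟩

section Intermediate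

variable (q : ℝ) {M : ℤ} (hM : 0 ≤ M) (hMs : (M : WithTop ℤ) < c.s) {w : ℤ × ℤ} {u v : ℤ}
  (hw : w = u • c.conv (M - 1) + v • c.conv M) (hu : 1 ≤ u)
include hM hMs hw hu

lemma bodyGauge_conv_sub_one_le (hQ : c.Q M ≤ |w.1|) (hv : v * c.Δ M ≤ 0) :
    bodyGauge c.ξ q (c.conv (M - 1)) ≤ bodyGauge c.ξ q w := by
  refine max_le_max (mul_le_mul_of_nonneg_right ?_ (exp_pos _).le)
    (mul_le_mul_of_nonneg_right ?_ (exp_pos _).le)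
  · rw [← Int.cast_abs, ← Int.cast_abs, Int.cast_le, conv,
      abs_of_nonneg (c.Q_nonneg (by omega) (c.coe_lt_s_of_le (by omega) hMs))]
    exact (c.Q_sub_one_le hM hMs).trans hQ
  · rw [hw, c.abs_defect_smul_add_smul hM hMs]
    change c.Δ (M - 1) ≤ _
    have hu' : (0 : ℝ) ≤ u - 1 := by rw [sub_nonneg]; exact_mod_cast hu
    have hΔ₀ : 0 ≤ c.Δ (M - 1) := abs_nonneg _
    nlinarith [le_abs_self ((u : ℝ) * c.Δ (M - 1) - v * c.Δ M), mul_nonneg hu' hΔ₀]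

lemma le_a_and_bodyGauge_conv_sub_one_add_smul_le (hv : 1 ≤ v)
    (hs : ((M + 1 : ℤ) : WithTop ℤ) < c.s) (hlt : |w.1| < c.Q (M + 1)) :
    v ≤ c.a (M + 1) ∧
      bodyGauge c.ξ q (c.conv (M - 1) + v • c.conv M) ≤ bodyGauge c.ξ q w := by
  have hQ₀ := c.Q_nonneg (by omega : -1 ≤ M - 1) (c.coe_lt_s_of_le (by omega) hMs)
  have hQ₁ := c.one_le_Q hM hMs
  have hrec := c.hQrec (M + 1) (by omega) hs
  rw [show M + 1 - 2 = M - 1 by ring, add_sub_cancel_right] at hrec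
  have hw₁ : w.1 = u * c.Q (M - 1) + v * c.Q M := by simp [hw, conv]
  have hw₀ : 0 < w.1 := by rw [hw₁]; nlinarith
  have hva : v ≤ c.a (M + 1) := by
    rw [abs_of_pos hw₀, hw₁, hrec] at hlt
    nlinarith
  have hΔ : (v : ℝ) * c.Δ M ≤ c.Δ (M - 1) :=
    (mul_le_mul_of_nonneg_right (by exact_mod_cast hva) (abs_nonneg _)).trans (c.a_mul_Δ_le hM hs)
  refine ⟨hva, max_le_max (mul_le_mul_of_nonneg_right ?_ (exp_pos _).le)
    (mul_le_mul_of_nonneg_right ?_ (exp_pos _).le)⟩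
  · rw [← Int.cast_abs, ← Int.cast_abs, Int.cast_le, abs_of_pos hw₀, abs_of_nonneg] <;>
      simp only [conv, Prod.fst_add, Prod.smul_fst, smul_eq_mul] <;> nlinarith
  · rw [← one_smul ℤ (c.conv (M - 1)), c.abs_defect_smul_add_smul hM hMs, hw,
      c.abs_defect_smul_add_smul hM hMs, Int.cast_one, one_mul, abs_of_nonneg (by linarith)]
    have hu' : (0 : ℝ) ≤ u - 1 := by rw [sub_nonneg]; exact_mod_cast hu
    have hΔ₀ : 0 ≤ c.Δ (M - 1) := abs_nonneg _
    nlinarith [le_abs_self ((u : ℝ) * c.Δ (M - 1) - v * c.Δ M), mul_nonneg hu' hΔ₀]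

lemma exists_bodyGauge_conv_sub_one_add_smul_le (hQ : c.Q M ≤ |w.1|)
    (hlt : ((M + 1 : ℤ) : WithTop ℤ) < c.s → |w.1| < c.Q (M + 1)) :
    ∃ t : ℤ, (t = 0 ∨ 1 ≤ t ∧ t ≤ c.a (M + 1) ∧ ((M + 1 : ℤ) : WithTop ℤ) < c.s) ∧
      bodyGauge c.ξ q (c.conv (M - 1) + t • c.conv M) ≤ bodyGauge c.ξ q w := by
  by_cases h : 1 ≤ v ∧ ((M + 1 : ℤ) : WithTop ℤ) < c.s
  · obtain ⟨hv, hs⟩ := h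
    obtain ⟨hva, hle⟩ :=
      c.le_a_and_bodyGauge_conv_sub_one_add_smul_le q hM hMs hw hu hv hs (hlt hs)
    exact ⟨v, Or.inr ⟨hv, hva, hs⟩, hle⟩
  · refine ⟨0, Or.inl rfl, ?_⟩
    rw [zero_smul, add_zero]
    refine c.bodyGauge_conv_sub_one_le q hM hMs hw hu hQ ?_
    rcases not_and_or.mp h with hv | hs
    · exact mul_nonpos_of_nonpos_of_nonneg (by exact_mod_cast (by omega : v ≤ 0)) (abs_nonneg _)
    · have := c.θ_sub_one_of_eq_s (c.coe_add_one_eq_s hMs hs)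
      rw [add_sub_cancel_right] at this
      simp [Δ_eq_abs_θ, this]

end Intermediate

lemma exists_isSemiconvergent_bodyGauge_le (q : ℝ) {M : ℤ} (hM : 0 ≤ M)
    (hMs : (M : WithTop ℤ) < c.s) {y : ℤ × ℤ} (hy : wedge y (c.conv M) ≠ 0) :
    ∃ f, c.IsSemiconvergent f ∧ wedge f (c.conv M) ≠ 0 ∧
      bodyGauge c.ξ q f ≤ bodyGauge c.ξ q y := by
  have hy₀ : y ≠ 0 := by rintro rfl; simp [wedge] at hy
  by_cases hy₁ : y.1 = 0
  · refine ⟨c.conv (-1), c.isSemiconvergent_conv le_rfl (c.coe_lt_s_of_le (by omega) hMs),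
      c.wedge_conv_ne_zero le_rfl (by omega) (by omega) (c.coe_lt_s_of_le (by omega) hMs) hMs, ?_⟩
    rw [c.bodyGauge_conv_neg_one]
    exact exp_le_bodyGauge hy₀ hy₁
  obtain ⟨n, hn, hns, hQ, hlt⟩ := c.exists_Q_le_lt (Int.one_le_abs hy₁)
  obtain rfl | hnM := eq_or_ne n M
  swap
  · exact ⟨c.conv n, c.isSemiconvergent_conv (by omega) hns,
      c.wedge_conv_ne_zero (by omega) (by omega) hnM hns hMs,
      c.bodyGauge_conv_le q hn hns hy₁ hQ hlt⟩
  obtain ⟨u, v, huv⟩ := c.exists_eq_smul_add_smul hn hns y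
  have hu : u ≠ 0 := by
    rintro rfl
    rw [huv, wedge_smul_add_smul_right, zero_mul] at hy
    exact hy rfl
  obtain ⟨w, u', v', hw, hu', hgw, hw₁⟩ : ∃ (w : ℤ × ℤ) (u' v' : ℤ),
      w = u' • c.conv (n - 1) + v' • c.conv n ∧ 1 ≤ u' ∧
        bodyGauge c.ξ q w = bodyGauge c.ξ q y ∧ |w.1| = |y.1| := by
    rcases hu.lt_or_gt with h | h
    · exact ⟨-y, -u, -v, by rw [huv, neg_add, neg_smul, neg_smul], by omega, bodyGauge_neg y,
        by simp⟩
    · exact ⟨y, u, v, huv, h, rfl, rfl⟩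
  obtain ⟨t, ht, hle⟩ := c.exists_bodyGauge_conv_sub_one_add_smul_le q hn hns hw hu'
    (hw₁ ▸ hQ) (hw₁ ▸ hlt)
  have hwedge := wedge_smul_add_smul_right 1 t (c.conv (n - 1)) (c.conv n)
  rw [one_smul, one_mul] at hwedge
  refine ⟨_, c.isSemiconvergent_conv_sub_one_add_smul hn hns ht, ?_, hgw ▸ hle⟩
  rw [hwedge]
  exact c.wedge_conv_ne_zero (by omega) (by omega) (by omega)
    (c.coe_lt_s_of_le (by omega) hns) hns

lemma exists_isSemiconvergent_isMin (q : ℝ) {M : ℤ} (hM : 0 ≤ M) (hMs : (M : WithTop ℤ) < c.s) :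
    ∃ f, c.IsSemiconvergent f ∧ wedge f (c.conv M) ≠ 0 ∧
      ∀ y, wedge y (c.conv M) ≠ 0 → bodyGauge c.ξ q f ≤ bodyGauge c.ξ q y := by
  obtain ⟨y₀, hy₀, hmin⟩ := Northcott.exists_min_image (bodyGauge c.ξ q)
    {y | wedge y (c.conv M) ≠ 0}
    ⟨_, c.wedge_conv_ne_zero le_rfl (by omega) (by omega) (c.coe_lt_s_of_le (by omega) hMs) hMs⟩
  obtain ⟨f, hf, hfM, hle⟩ := c.exists_isSemiconvergent_bodyGauge_le q hM hMs hy₀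
  exact ⟨f, hf, hfM, fun y hy => hle.trans (hmin y hy)⟩

end CFData

theorem stmt9 (c : CFData) (q : ℝ) (hq : 0 ≤ q) (j : ℕ) (hj : j = 1 ∨ j = 2) :
    ∃ x : ℤ × ℤ,
      ((∃ n : ℤ, -1 ≤ n ∧ (n : WithTop ℤ) < c.s ∧ x = (c.Q n, c.P n)) ∨
       (∃ n t : ℤ, 1 ≤ n ∧ (n : WithTop ℤ) < c.s ∧ 0 < t ∧ t < c.a n ∧
         x = (c.Qt n t, c.Pt n t))) ∧
      LL c.ξ j q = Lx c.ξ x q := by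
  obtain ⟨M, hM, hMs, hMmin⟩ := c.exists_conv_isMin hq
  have hx : c.conv M ≠ 0 := c.conv_ne_zero (by omega) hMs
  rcases hj with rfl | rfl
  · exact ⟨c.conv M, c.isSemiconvergent_conv (by omega) hMs,
      congrArg log (lam_one_eq hx hMmin)⟩
  · obtain ⟨f, hf, hfM, hfmin⟩ := c.exists_isSemiconvergent_isMin q hM hMs
    exact ⟨f, hf, congrArg log (lam_two_eq hx hMmin hfM hfmin)⟩
end

section
/- Let x = (Q,P) ∈ ℤ² be primitive (i.e. with coprime coordinates) with Q ≥ 1, such that neither x nor −x equals any of the points x_m = (Q_m, P_m) with −1 ≤ m < s or x_{m,t} = (Q_{m,t}, P_{m,t}) with 1 ≤ m < s and 0 < t < a_m. Let n with 1 ≤ n ≤ s be the integer such that Q_{n−1} ≤ Q < Q_n (with Q_s = ∞ when s < ∞). Then |Qξ − P| ≥ Δ_{n−2} and, for all q ≥ 0, L_x(q) ≥ max{ L_{x_{n−2}}(q), L_{x_{n−1}}(q) }. -/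
/-!
Since `Q (n-1) P (n-2) - P (n-1) Q (n-2) = ±1`, every `x` is an integer combination
`x = u x_{n-1} + v x_{n-2}`, and because `Q_m ξ - P_m = (-1)^m Δ_m` this gives
`|Qξ - P| = |u Δ_{n-1} - v Δ_{n-2}|`. Primitivity of `x` and the exclusion of `±x_{n-1}` and
`±x_{n-2}` force `u v ≠ 0`, and `Q ≥ 1` rules out `u, v < 0`. If `u` and `v` have opposite signs,
the two terms add up and the bound `Δ_{n-2}` is immediate. If both are positive and `n < s`, then
`Q < Q_n` forces `u < a_n`, the exclusion of `x_{n,u}` forces `v ≥ 2`, and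
`Δ_n = Δ_{n-2} - a_n Δ_{n-1} ≥ 0` gives `v Δ_{n-2} - u Δ_{n-1} ≥ Δ_{n-2}`; if `n = s`, then
`Δ_{n-1} = 0`. The bound on `L_x` follows because `L_x` is monotone in `|Q|` and in `|Qξ - P|`,
while `Q ≥ Q_{n-1} ≥ Q_{n-2}` and `Δ_{n-2} ≥ Δ_{n-1}`.
-/

open Pointwise

theorem exists_eq_add_mul_of_isUnit {Q₁ P₁ Q₂ P₂ : ℤ} (h : IsUnit (Q₁ * P₂ - P₁ * Q₂))
    (X Y : ℤ) :
    ∃ u v : ℤ, X = u * Q₁ + v * Q₂ ∧ Y = u * P₁ + v * P₂ := by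
  set e := Q₁ * P₂ - P₁ * Q₂ with he
  have he2 : e * e = 1 := by rcases Int.isUnit_iff.mp h with h | h <;> simp [h]
  refine ⟨e * (X * P₂ - Y * Q₂), e * (Y * Q₁ - X * P₁), ?_, ?_⟩
  · linear_combination (-X) * he2 - (e * X) * he
  · linear_combination (-Y) * he2 - (e * Y) * he

theorem units_mul_eq_of_isCoprime {X Y u Q P : ℤ} (h : IsCoprime X Y) (hX : X = u * Q)
    (hY : Y = u * P) : (u = 1 ∨ u = -1) ∧ (u * X, u * Y) = (Q, P) := by
  have hu := Int.isUnit_iff.mp (h.isUnit_of_dvd' ⟨Q, hX⟩ ⟨P, hY⟩)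
  refine ⟨hu, ?_⟩
  rcases hu with rfl | rfl <;> simp [hX, hY]

theorem le_abs_mul_sub_mul_of_mul_neg {A B : ℝ} {u v : ℤ} (hA : 0 ≤ A) (hB : 0 ≤ B)
    (huv : u * v < 0) : B ≤ |u * A - v * B| := by
  rcases mul_neg_iff.mp huv with ⟨hu, hv⟩ | ⟨hu, hv⟩
  · have hu : (0 : ℝ) ≤ u := by exact_mod_cast hu.le
    have hv : (v : ℝ) ≤ -1 := by exact_mod_cast (show v ≤ -1 by omega)
    nlinarith [le_abs_self ((u : ℝ) * A - v * B)]
  · have hu : (u : ℝ) ≤ 0 := by exact_mod_cast hu.le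
    have hv : (1 : ℝ) ≤ v := by exact_mod_cast (show 1 ≤ v by omega)
    nlinarith [neg_le_abs ((u : ℝ) * A - v * B)]

theorem Lx_le_Lx {ξ q : ℝ} {x y : ℤ × ℤ} (hx : x ≠ 0) (h₁ : |(x.1 : ℝ)| ≤ |(y.1 : ℝ)|)
    (h₂ : |(x.1 : ℝ) * ξ - x.2| ≤ |(y.1 : ℝ) * ξ - y.2|) : Lx ξ x q ≤ Lx ξ y q := by
  have hpos :
      0 < max (|(x.1 : ℝ)| * Real.exp (-q)) (|(x.1 : ℝ) * ξ - x.2| * Real.exp q) := by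
    rcases eq_or_ne x.1 0 with h | h
    · have h' : x.2 ≠ 0 := fun h' => hx (Prod.ext h h')
      exact lt_max_of_lt_right (mul_pos (by simpa [h]) (Real.exp_pos q))
    · exact lt_max_of_lt_left (mul_pos (by positivity) (Real.exp_pos _))
  exact Real.log_le_log hpos (max_le_max (mul_le_mul_of_nonneg_right h₁ (Real.exp_pos _).le)
    (mul_le_mul_of_nonneg_right h₂ (Real.exp_pos _).le))

namespace CFData

variable (c : CFData)

def SatisfiesRecurrence (x : ℤ → ℤ) : Prop :=
  ∀ k : ℤ, 1 ≤ k → (k : WithTop ℤ) < c.s → x k = x (k - 2) + c.a k * x (k - 1)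

variable {c}

theorem coe_lt_s_of_lt {m n : ℤ} (h : m < n) (hn : (n : WithTop ℤ) ≤ c.s) :
    (m : WithTop ℤ) < c.s :=
  (WithTop.coe_lt_coe.mpr h).trans_le hn

theorem SatisfiesRecurrence.pos {x : ℤ → ℤ} (hx : c.SatisfiesRecurrence x) {b : ℤ}
    (hb : 0 ≤ b) (h0 : 0 ≤ x (b - 1)) (h1 : (b : WithTop ℤ) < c.s → 0 < x b)
    {k : ℤ} (hk : b ≤ k) (hks : (k : WithTop ℤ) < c.s) : 0 < x k := by
  suffices h : (k : WithTop ℤ) < c.s → 0 ≤ x (k - 1) ∧ 0 < x k from (h hks).2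
  clear hks
  induction k, hk using Int.leInduction with
  | base => exact fun hbs => ⟨h0, h1 hbs⟩
  | succ k hk ih =>
    intro hks
    obtain ⟨hprev, hcur⟩ := ih (coe_lt_s_of_lt (lt_add_one k) hks.le)
    have hrec := hx (k + 1) (by omega) hks
    have ha := c.ha (k + 1) (by omega) hks
    rw [show k + 1 - 2 = k - 1 by ring, add_sub_cancel_right] at hrec
    rw [add_sub_cancel_right, hrec]
    exact ⟨hcur.le, by nlinarith⟩

theorem Q_pos {k : ℤ} (hk : 0 ≤ k) (hks : (k : WithTop ℤ) < c.s) : 0 < c.Q k :=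
  SatisfiesRecurrence.pos (c := c) c.hQrec le_rfl (by simp [c.hQneg]) (fun _ => by simp [c.hQ0])
    hk hks

theorem Q_nonneg_s10 {k : ℤ} (hk : -1 ≤ k) (hks : (k : WithTop ℤ) < c.s) : 0 ≤ c.Q k := by
  rcases hk.eq_or_lt with rfl | hk
  · simp [c.hQneg]
  · exact (Q_pos (by omega) hks).le

theorem Q_sub_one_le_s10 {k : ℤ} (hk : 0 ≤ k) (hks : (k : WithTop ℤ) < c.s) :
    c.Q (k - 1) ≤ c.Q k := by
  rcases hk.eq_or_lt with rfl | hk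
  · simp [c.hQneg, c.hQ0]
  · have h2 := Q_nonneg_s10 (c := c) (k := k - 2) (by omega) (coe_lt_s_of_lt (by omega) hks.le)
    have h1 := Q_nonneg_s10 (c := c) (k := k - 1) (by omega) (coe_lt_s_of_lt (by omega) hks.le)
    have ha := c.ha k hk hks
    rw [c.hQrec k hk hks]
    nlinarith

theorem det_eq_negOnePow {k : ℤ} (hk : 0 ≤ k) (hks : (k : WithTop ℤ) < c.s) :
    c.Q k * c.P (k - 1) - c.P k * c.Q (k - 1) = k.negOnePow := by
  induction k, hk using Int.leInduction with
  | base => simp [c.hQ0, c.hP0, c.hQneg, c.hPneg]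
  | succ k hk ih =>
    have hrec := ih (coe_lt_s_of_lt (lt_add_one k) hks.le)
    rw [c.hQrec (k + 1) (by omega) hks, c.hPrec (k + 1) (by omega) hks,
      show k + 1 - 2 = k - 1 by ring, add_sub_cancel_right, Int.negOnePow_succ, Units.val_neg,
      ← hrec]
    ring

theorem negOnePow_mul_cross_nonneg {m k : ℤ} (hm : -1 ≤ m) (hmk : m ≤ k)
    (hks : (k : WithTop ℤ) < c.s) :
    0 ≤ m.negOnePow * (c.Q m * c.P k - c.P m * c.Q k) := by
  rcases hmk.eq_or_lt with rfl | hmk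
  · simp [mul_comm]
  have hx :
      c.SatisfiesRecurrence fun k => m.negOnePow * (c.Q m * c.P k - c.P m * c.Q k) := by
    intro k hk hks
    simp only [c.hQrec k hk hks, c.hPrec k hk hks]
    ring
  refine (hx.pos (b := m + 1) (by omega) (by simp [mul_comm]) (fun hs => ?_) hmk hks).le
  have hdet := det_eq_negOnePow (by omega) hs
  rw [add_sub_cancel_right, Int.negOnePow_succ, Units.val_neg] at hdet
  have h1 : (m.negOnePow : ℤ) * (c.Q m * c.P (m + 1) - c.P m * c.Q (m + 1)) = 1 := by
    linear_combination (-(m.negOnePow : ℤ)) * hdet + Int.units_coe_mul_self m.negOnePow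
  simp only [h1, zero_lt_one]

theorem one_le_of_coe_eq_s {σ : ℤ} (hσ : (σ : WithTop ℤ) = c.s) : 1 ≤ σ := by
  have := c.hs; rw [← hσ] at this; exact_mod_cast this

theorem negOnePow_mul_sub_nonneg {m : ℤ} (hm : -1 ≤ m) (hms : (m : WithTop ℤ) < c.s) :
    0 ≤ (m.negOnePow : ℝ) * (c.Q m * c.ξ - c.P m) := by
  -- `ξ` is the limit (or the last) of the convergents `P k / Q k`, all on one side of `P m / Q m`.
  have approx : ∀ k : ℤ, 0 ≤ k → m ≤ k → (k : WithTop ℤ) < c.s →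
      0 ≤ (m.negOnePow : ℝ) * (c.Q m * (c.P k / c.Q k : ℝ) - c.P m) := by
    intro k hk hmk hks
    have hQk : (0 : ℝ) < c.Q k := by exact_mod_cast Q_pos hk hks
    have hcross : (0 : ℝ) ≤ (m.negOnePow * (c.Q m * c.P k - c.P m * c.Q k) : ℤ) := by
      exact_mod_cast negOnePow_mul_cross_nonneg hm hmk hks
    rw [show (m.negOnePow : ℝ) * (c.Q m * (c.P k / c.Q k : ℝ) - c.P m) =
        ((m.negOnePow * (c.Q m * c.P k - c.P m * c.Q k) : ℤ) : ℝ) / c.Q k by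
      field_simp; push_cast; ring]
    positivity
  cases hs : c.s with
  | top =>
    refine ge_of_tendsto (((c.hinf hs).const_mul _).sub_const _ |>.const_mul _)
      (Filter.eventually_atTop.2 ⟨m.toNat, fun k hk => approx k (by omega) (by omega) ?_⟩)
    rw [hs]; exact WithTop.coe_lt_top _
  | coe σ =>
    have hmσ : m < σ := by rw [hs] at hms; exact_mod_cast hms
    have hσ := one_le_of_coe_eq_s hs.symm
    rw [c.hfin σ hs.symm]
    exact approx (σ - 1) (by omega) (by omega) (coe_lt_s_of_lt (sub_one_lt σ) hs.ge)

theorem sub_eq_negOnePow_mul_Δ {m : ℤ} (hm : -1 ≤ m) (hms : (m : WithTop ℤ) < c.s) :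
    (c.Q m * c.ξ - c.P m : ℝ) = m.negOnePow * c.Δ m := by
  have h := negOnePow_mul_sub_nonneg hm hms
  rcases Int.units_eq_one_or m.negOnePow with h1 | h1 <;>
    simp only [Δ, h1, Units.val_one, Units.val_neg, Int.cast_one, Int.cast_neg, one_mul,
      neg_one_mul] at h ⊢
  · exact (abs_of_nonneg h).symm
  · rw [abs_of_nonpos (by linarith), neg_neg]

theorem Δ_eq_sub {n : ℤ} (hn : 1 ≤ n) (hns : (n : WithTop ℤ) < c.s) :
    c.Δ n = c.Δ (n - 2) - c.a n * c.Δ (n - 1) := by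
  have hrec : (c.Q n * c.ξ - c.P n : ℝ) =
      (c.Q (n - 2) * c.ξ - c.P (n - 2)) + c.a n * (c.Q (n - 1) * c.ξ - c.P (n - 1)) := by
    rw [c.hQrec n hn hns, c.hPrec n hn hns]; push_cast; ring
  rw [sub_eq_negOnePow_mul_Δ (by omega) hns,
    sub_eq_negOnePow_mul_Δ (by omega) (coe_lt_s_of_lt (by omega) hns.le),
    sub_eq_negOnePow_mul_Δ (by omega) (coe_lt_s_of_lt (by omega) hns.le),
    Int.negOnePow_sub, Int.negOnePow_sub, Int.negOnePow_one, Int.negOnePow_even 2 even_two,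
    mul_one] at hrec
  have he : (n.negOnePow : ℝ) * n.negOnePow = 1 := by exact_mod_cast Int.units_coe_mul_self _
  push_cast at hrec
  linear_combination
    (n.negOnePow : ℝ) * hrec - (c.Δ n - c.Δ (n - 2) + c.a n * c.Δ (n - 1)) * he

theorem Δ_sub_one_eq_zero {σ : ℤ} (hσ : (σ : WithTop ℤ) = c.s) : c.Δ (σ - 1) = 0 := by
  have hσ1 := one_le_of_coe_eq_s hσ
  have hQ : (c.Q (σ - 1) : ℝ) ≠ 0 := by
    exact_mod_cast (Q_pos (by omega) (coe_lt_s_of_lt (sub_one_lt σ) hσ.le)).ne'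
  rw [Δ, c.hfin σ hσ, mul_div_cancel₀ _ hQ, sub_self, abs_zero]

theorem a_mul_Δ_sub_one_le {n : ℤ} (hn : 1 ≤ n) (hns : (n : WithTop ℤ) < c.s) :
    c.a n * c.Δ (n - 1) ≤ c.Δ (n - 2) := by
  have h := Δ_eq_sub hn hns
  have : 0 ≤ c.Δ n := abs_nonneg _
  linarith

theorem Δ_sub_one_le {n : ℤ} (hn : 1 ≤ n) (hns : (n : WithTop ℤ) ≤ c.s) :
    c.Δ (n - 1) ≤ c.Δ (n - 2) := by
  rcases hns.lt_or_eq with hns | hns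
  · have ha : (1 : ℝ) ≤ c.a n := by exact_mod_cast c.ha n hn hns
    have : 0 ≤ c.Δ (n - 1) := abs_nonneg _
    nlinarith [a_mul_Δ_sub_one_le hn hns]
  · rw [Δ_sub_one_eq_zero hns]
    exact abs_nonneg _

theorem convergent_ne_zero {m : ℤ} (hm : -1 ≤ m) (hms : (m : WithTop ℤ) < c.s) :
    (c.Q m, c.P m) ≠ 0 := by
  rcases hm.eq_or_lt with rfl | hm
  · simp [c.hPneg]
  · simp [(Q_pos (by omega) hms).ne']

variable (c) in
def AvoidsConvergents (X Y : ℤ) : Prop :=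
  ∀ e : ℤ, e = 1 ∨ e = -1 →
    (∀ m : ℤ, -1 ≤ m → (m : WithTop ℤ) < c.s → (e * X, e * Y) ≠ (c.Q m, c.P m)) ∧
    (∀ m t : ℤ, 1 ≤ m → (m : WithTop ℤ) < c.s → 0 < t → t < c.a m →
      (e * X, e * Y) ≠ (c.Qt m t, c.Pt m t))

theorem exists_coords_of_avoidsConvergents {Qx Px : ℤ} (hcop : IsCoprime Qx Px) (hQ1 : 1 ≤ Qx)
    (hnot : c.AvoidsConvergents Qx Px) {n : ℤ} (hn1 : 1 ≤ n) (hns : (n : WithTop ℤ) ≤ c.s)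
    (hhigh : (n : WithTop ℤ) < c.s → Qx < c.Q n) :
    ∃ u v : ℤ, Qx = u * c.Q (n - 1) + v * c.Q (n - 2) ∧
      Px = u * c.P (n - 1) + v * c.P (n - 2) ∧
      (u * v < 0 ∨ 0 < u ∧ 0 < v ∧ ((n : WithTop ℤ) < c.s → u < c.a n ∧ 2 ≤ v)) := by
  have hn1s : ((n - 1 : ℤ) : WithTop ℤ) < c.s := coe_lt_s_of_lt (sub_one_lt n) hns
  have hn2s : ((n - 2 : ℤ) : WithTop ℤ) < c.s := coe_lt_s_of_lt (by omega) hns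
  have hdet := det_eq_negOnePow (by omega) hn1s
  rw [show n - 1 - 1 = n - 2 by ring] at hdet
  obtain ⟨u, v, hQ, hP⟩ := exists_eq_add_mul_of_isUnit (hdet ▸ Units.isUnit _) Qx Px
  have hu : u ≠ 0 := by
    rintro rfl
    obtain ⟨he, heq⟩ := units_mul_eq_of_isCoprime hcop (by simpa using hQ) (by simpa using hP)
    exact (hnot v he).1 (n - 2) (by omega) hn2s heq
  have hv : v ≠ 0 := by
    rintro rfl
    obtain ⟨he, heq⟩ := units_mul_eq_of_isCoprime hcop (by simpa using hQ) (by simpa using hP)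
    exact (hnot u he).1 (n - 1) (by omega) hn1s heq
  refine ⟨u, v, hQ, hP, ?_⟩
  rcases (mul_ne_zero hu hv).lt_or_gt with huv | huv
  · exact Or.inl huv
  have hQ₁ := Q_pos (c := c) (by omega) hn1s
  have hQ₂ := Q_nonneg_s10 (c := c) (by omega) hn2s
  obtain ⟨hu, hv⟩ : 0 < u ∧ 0 < v := by
    refine (pos_and_pos_or_neg_and_neg_of_mul_pos huv).resolve_right fun ⟨hu, hv⟩ => ?_
    nlinarith
  refine Or.inr ⟨hu, hv, fun hlt => ?_⟩
  have hua : u < c.a n := by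
    have hQn := c.hQrec n hn1 hlt ▸ hhigh hlt
    by_contra! hau
    nlinarith
  refine ⟨hua, ?_⟩
  by_contra! hv2
  obtain rfl : v = 1 := by omega
  exact (hnot 1 (Or.inl rfl)).2 n u hn1 hlt hu hua (by simp [Qt, Pt, hQ, hP, add_comm])

theorem Δ_sub_two_le {Qx Px : ℤ} (hcop : IsCoprime Qx Px) (hQ1 : 1 ≤ Qx)
    (hnot : c.AvoidsConvergents Qx Px) {n : ℤ} (hn1 : 1 ≤ n) (hns : (n : WithTop ℤ) ≤ c.s)
    (hhigh : (n : WithTop ℤ) < c.s → Qx < c.Q n) :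
    c.Δ (n - 2) ≤ |(Qx : ℝ) * c.ξ - Px| := by
  obtain ⟨u, v, hQ, hP, hcases⟩ :=
    exists_coords_of_avoidsConvergents hcop hQ1 hnot hn1 hns hhigh
  have hδ :
      (Qx * c.ξ - Px : ℝ) = (n - 1).negOnePow * (u * c.Δ (n - 1) - v * c.Δ (n - 2)) := by
    have h₁ := sub_eq_negOnePow_mul_Δ (m := n - 1) (by omega) (coe_lt_s_of_lt (by omega) hns)
    have h₂ := sub_eq_negOnePow_mul_Δ (m := n - 2) (by omega) (coe_lt_s_of_lt (by omega) hns)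
    rw [show n - 2 = n - 1 - 1 by ring, Int.negOnePow_sub, Int.negOnePow_one] at h₂
    rw [hQ, hP, show n - 2 = n - 1 - 1 by ring]
    push_cast at h₁ h₂ ⊢
    linear_combination (u : ℝ) * h₁ + (v : ℝ) * h₂
  rw [hδ, abs_mul, ← Int.cast_abs, Int.abs_negOnePow, Int.cast_one, one_mul]
  have hA : 0 ≤ c.Δ (n - 1) := abs_nonneg _
  have hB : 0 ≤ c.Δ (n - 2) := abs_nonneg _
  rcases hcases with huv | ⟨hu, hv, hlt⟩
  · exact le_abs_mul_sub_mul_of_mul_neg hA hB huv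
  suffices h : u * c.Δ (n - 1) ≤ (v - 1) * c.Δ (n - 2) by
    linarith [neg_le_abs ((u : ℝ) * c.Δ (n - 1) - v * c.Δ (n - 2))]
  rcases hns.lt_or_eq with hns | hns
  · obtain ⟨hua, hv2⟩ := hlt hns
    have hua : (u : ℝ) ≤ c.a n - 1 := by exact_mod_cast (show u ≤ c.a n - 1 by omega)
    have hv2 : (2 : ℝ) ≤ v := by exact_mod_cast hv2
    nlinarith [a_mul_Δ_sub_one_le hn1 hns]
  · rw [Δ_sub_one_eq_zero hns, mul_zero]
    have hv : (1 : ℝ) ≤ v := by exact_mod_cast hv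
    nlinarith

end CFData

theorem stmt10 (c : CFData) (Qx Px : ℤ) (hcop : IsCoprime Qx Px) (hQ1 : 1 ≤ Qx)
    (hnot : ∀ e : ℤ, e = 1 ∨ e = -1 →
      (∀ m : ℤ, -1 ≤ m → (m : WithTop ℤ) < c.s → (e * Qx, e * Px) ≠ (c.Q m, c.P m)) ∧
      (∀ m t : ℤ, 1 ≤ m → (m : WithTop ℤ) < c.s → 0 < t → t < c.a m →
        (e * Qx, e * Px) ≠ (c.Qt m t, c.Pt m t)))
    (n : ℤ) (hn1 : 1 ≤ n) (hns : (n : WithTop ℤ) ≤ c.s)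
    (hlow : c.Q (n - 1) ≤ Qx) (hhigh : (n : WithTop ℤ) < c.s → Qx < c.Q n) :
    c.Δ (n - 2) ≤ |(Qx : ℝ) * c.ξ - (Px : ℝ)| ∧
    ∀ q : ℝ, 0 ≤ q →
      max (Lx c.ξ (c.Q (n - 2), c.P (n - 2)) q) (Lx c.ξ (c.Q (n - 1), c.P (n - 1)) q) ≤
        Lx c.ξ (Qx, Px) q := by
  have hn1s : ((n - 1 : ℤ) : WithTop ℤ) < c.s := c.coe_lt_s_of_lt (sub_one_lt n) hns
  have hn2s : ((n - 2 : ℤ) : WithTop ℤ) < c.s := c.coe_lt_s_of_lt (by omega) hns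
  have hΔ := c.Δ_sub_two_le hcop hQ1 hnot hn1 hns hhigh
  have hQ₂ : (0 : ℝ) ≤ c.Q (n - 2) := by exact_mod_cast c.Q_nonneg_s10 (by omega) hn2s
  have hQ₂₁ : (c.Q (n - 2) : ℝ) ≤ c.Q (n - 1) := by
    exact_mod_cast show n - 1 - 1 = n - 2 by ring ▸ c.Q_sub_one_le_s10 (by omega) hn1s
  have hQ₁x : (c.Q (n - 1) : ℝ) ≤ Qx := by exact_mod_cast hlow
  refine ⟨hΔ, fun q _ => max_le ?_ ?_⟩
  · exact Lx_le_Lx (c.convergent_ne_zero (by omega) hn2s)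
      (abs_le_abs_of_nonneg hQ₂ (hQ₂₁.trans hQ₁x)) hΔ
  · exact Lx_le_Lx (c.convergent_ne_zero (by omega) hn1s)
      (abs_le_abs_of_nonneg (hQ₂.trans hQ₂₁) hQ₁x) ((c.Δ_sub_one_le hn1 hns).trans hΔ)
end
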